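/- arXiv:2101.06222 — 4 statements merged into one kernel-verified Lean document; each statement's English description precedes it below -/
import Mathlib

section
/- Let L > 0 and 0 < ℓ < L/2, and let q_{L,ℓ} be the smooth cutoff defined below, with piecewise derivative q'_{L,ℓ}(t) = −(π/(4ℓ))·sin(π(t + L/2 − ℓ)/(4ℓ)) if |t + L/2| ≤ ℓ, q'_{L,ℓ}(t) = −(π/(4ℓ))·sin(π(t − L/2 + ℓ)/(4ℓ)) if |t − L/2| ≤ ℓ, and q'_{L,ℓ}(t) = 0 otherwise. Let ψ : ℝ → ℂ be continuously differentiable and L-periodic (ψ(t + L) = ψ(t) for all t ∈ ℝ). Then ∫_ℝ |q'_{L,ℓ}(t)·ψ(t) + q_{L,ℓ}(t)·ψ'(t)|² dt ≤ ∫_{−L/2}^{L/2} |ψ'(t)|² dt + (π²/(16 ℓ²)) ∫_ℝ |ψ(t)|² χ_{L,ℓ}(t) dt, where χ_{L,ℓ}(t) = 1 if |t + L/2| ≤ ℓ or |t − L/2| ≤ ℓ, and χ_{L,ℓ}(t) = 0 otherwise. -/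
open MeasureTheory

/-- The smooth cutoff `q_{L,ℓ}`. -/
noncomputable def qcut (L ℓ t : ℝ) : ℝ :=
  if |t + L / 2| ≤ ℓ then Real.cos (Real.pi * (t + L / 2 - ℓ) / (4 * ℓ))
  else if |t| < L / 2 - ℓ then 1
  else if |t - L / 2| ≤ ℓ then Real.cos (Real.pi * (t - L / 2 + ℓ) / (4 * ℓ))
  else 0

/-- The piecewise derivative `q'_{L,ℓ}` of the cutoff. -/
noncomputable def qcut' (L ℓ t : ℝ) : ℝ :=
  if |t + L / 2| ≤ ℓ then -(Real.pi / (4 * ℓ)) * Real.sin (Real.pi * (t + L / 2 - ℓ) / (4 * ℓ))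
  else if |t - L / 2| ≤ ℓ then -(Real.pi / (4 * ℓ)) * Real.sin (Real.pi * (t - L / 2 + ℓ) / (4 * ℓ))
  else 0

/-- The indicator `χ_{L,ℓ}` of the two boundary layers. -/
noncomputable def chicut (L ℓ t : ℝ) : ℝ :=
  if |t + L / 2| ≤ ℓ ∨ |t - L / 2| ≤ ℓ then 1 else 0

namespace KineticAux

lemma norm_comb (a b : ℝ) (z w : ℂ) :
    ‖(a : ℂ) * z + (b : ℂ) * w‖ ^ 2
      = a ^ 2 * ‖z‖ ^ 2 + b ^ 2 * ‖w‖ ^ 2 + 2 * a * b * (z.re * w.re + z.im * w.im) := by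
  have h : ∀ v : ℂ, ‖v‖ ^ 2 = v.re * v.re + v.im * v.im := by
    intro v
    rw [Complex.sq_norm, Complex.normSq_apply]
  rw [h, h, h]
  simp only [Complex.add_re, Complex.add_im, Complex.mul_re, Complex.mul_im,
    Complex.ofReal_re, Complex.ofReal_im]
  ring

lemma measurable_qcut (L ℓ : ℝ) : Measurable (qcut L ℓ) := by
  unfold qcut
  refine Measurable.ite (measurableSet_le (by fun_prop) measurable_const) (by fun_prop) ?_
  refine Measurable.ite (measurableSet_lt (by fun_prop) measurable_const) measurable_const ?_
  exact Measurable.ite (measurableSet_le (by fun_prop) measurable_const) (by fun_prop)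
    measurable_const

lemma measurable_qcut' (L ℓ : ℝ) : Measurable (qcut' L ℓ) := by
  unfold qcut'
  refine Measurable.ite (measurableSet_le (by fun_prop) measurable_const) (by fun_prop) ?_
  exact Measurable.ite (measurableSet_le (by fun_prop) measurable_const) (by fun_prop)
    measurable_const

lemma abs_qcut_le_one (L ℓ t : ℝ) : |qcut L ℓ t| ≤ 1 := by
  unfold qcut
  split_ifs <;> simp [Real.abs_cos_le_one]

lemma abs_qcut'_le (L ℓ t : ℝ) (hℓ : 0 < ℓ) : |qcut' L ℓ t| ≤ Real.pi / (4 * ℓ) := by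
  have hk : 0 ≤ Real.pi / (4 * ℓ) := by positivity
  unfold qcut'
  split_ifs
  · rw [abs_mul, abs_neg, abs_of_nonneg hk]
    calc Real.pi / (4 * ℓ) * |Real.sin _| ≤ Real.pi / (4 * ℓ) * 1 :=
        mul_le_mul_of_nonneg_left (Real.abs_sin_le_one _) hk
      _ = Real.pi / (4 * ℓ) := mul_one _
  · rw [abs_mul, abs_neg, abs_of_nonneg hk]
    calc Real.pi / (4 * ℓ) * |Real.sin _| ≤ Real.pi / (4 * ℓ) * 1 :=
        mul_le_mul_of_nonneg_left (Real.abs_sin_le_one _) hk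
      _ = Real.pi / (4 * ℓ) := mul_one _
  · simpa using hk

lemma outside_zero (L ℓ t : ℝ) (hL : 0 < L) (hℓ : 0 < ℓ)
    (h : t < -(L / 2) - ℓ ∨ L / 2 + ℓ < t) : qcut L ℓ t = 0 ∧ qcut' L ℓ t = 0 := by
  have h1 : ¬ |t + L / 2| ≤ ℓ := by
    intro hc; rw [abs_le] at hc; rcases h with h | h <;> linarith [hc.1, hc.2]
  have h2 : ¬ |t| < L / 2 - ℓ := by
    intro hc; rw [abs_lt] at hc; rcases h with h | h <;> linarith [hc.1, hc.2]
  have h3 : ¬ |t - L / 2| ≤ ℓ := by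
    intro hc; rw [abs_le] at hc; rcases h with h | h <;> linarith [hc.1, hc.2]
  unfold qcut qcut'
  rw [if_neg h1, if_neg h2, if_neg h3, if_neg h1, if_neg h3]
  exact ⟨rfl, rfl⟩

lemma middle_one (L ℓ t : ℝ) (hL : 0 < L) (hℓ : 0 < ℓ) (hℓL : ℓ < L / 2)
    (ht : t ∈ Set.Ioc (-(L / 2) + ℓ) (L / 2 - ℓ)) : qcut L ℓ t = 1 ∧ qcut' L ℓ t = 0 := by
  obtain ⟨ht1, ht2⟩ := ht
  have h1 : ¬ |t + L / 2| ≤ ℓ := by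
    intro hc; rw [abs_le] at hc; linarith [hc.2]
  rcases lt_or_eq_of_le ht2 with hlt | heq
  · have h2 : |t| < L / 2 - ℓ := abs_lt.2 ⟨by linarith, hlt⟩
    have h3 : ¬ |t - L / 2| ≤ ℓ := by
      intro hc; rw [abs_le] at hc; linarith [hc.1]
    unfold qcut qcut'
    rw [if_neg h1, if_pos h2, if_neg h1, if_neg h3]
    exact ⟨rfl, rfl⟩
  · have h2 : ¬ |t| < L / 2 - ℓ := by
      rw [heq, abs_of_pos (by linarith)]; exact lt_irrefl _
    have h3 : |t - L / 2| ≤ ℓ := by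
      rw [heq]; rw [abs_le]; constructor <;> linarith
    have harg : Real.pi * (t - L / 2 + ℓ) / (4 * ℓ) = 0 := by
      rw [heq]; ring_nf
    unfold qcut qcut'
    rw [if_neg h1, if_neg h2, if_pos h3, if_neg h1, if_pos h3, harg]
    simp

lemma right_layer (L ℓ t : ℝ) (hL : 0 < L) (hℓ : 0 < ℓ) (hℓL : ℓ < L / 2)
    (ht : |t - L / 2| ≤ ℓ) :
    qcut L ℓ t = Real.cos (Real.pi * (t - L / 2 + ℓ) / (4 * ℓ)) ∧
    qcut' L ℓ t = -(Real.pi / (4 * ℓ)) * Real.sin (Real.pi * (t - L / 2 + ℓ) / (4 * ℓ)) ∧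
    qcut L ℓ (t - L) = Real.sin (Real.pi * (t - L / 2 + ℓ) / (4 * ℓ)) ∧
    qcut' L ℓ (t - L) = Real.pi / (4 * ℓ) * Real.cos (Real.pi * (t - L / 2 + ℓ) / (4 * ℓ)) := by
  obtain ⟨hta, htb⟩ := abs_le.1 ht
  have h1 : ¬ |t + L / 2| ≤ ℓ := by
    intro hc; rw [abs_le] at hc; linarith [hc.2]
  have h2 : ¬ |t| < L / 2 - ℓ := by
    intro hc; rw [abs_lt] at hc; linarith [hc.2]
  have h4 : |t - L + L / 2| ≤ ℓ := by
    have : t - L + L / 2 = t - L / 2 := by ring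
    rw [this]; exact ht
  have hshift : Real.pi * (t - L + L / 2 - ℓ) / (4 * ℓ)
      = Real.pi * (t - L / 2 + ℓ) / (4 * ℓ) - Real.pi / 2 := by
    field_simp
    ring
  refine ⟨?_, ?_, ?_, ?_⟩
  · unfold qcut; rw [if_neg h1, if_neg h2, if_pos ht]
  · unfold qcut'; rw [if_neg h1, if_pos ht]
  · unfold qcut; rw [if_pos h4, hshift, Real.cos_sub_pi_div_two]
  · unfold qcut'; rw [if_pos h4, hshift, Real.sin_sub_pi_div_two]
    ring

end KineticAux

set_option maxHeartbeats 1000000 in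
/-- **Kinetic-energy localization inequality** (Lemma A.1):
`∫_ℝ |(q ψ)'|² ≤ ∫_{−L/2}^{L/2} |ψ'|² + (π²/(16ℓ²)) ∫_ℝ |ψ|² χ_{L,ℓ}`
for a `C¹`, `L`-periodic `ψ`. -/
theorem kinetic_localization
    (L ℓ : ℝ) (hL : 0 < L) (hℓ : 0 < ℓ) (hℓL : ℓ < L / 2)
    (ψ : ℝ → ℂ) (hψ : ContDiff ℝ 1 ψ)
    (hper : ∀ t : ℝ, ψ (t + L) = ψ t) :
    ∫ t : ℝ, ‖(qcut' L ℓ t : ℂ) * ψ t + (qcut L ℓ t : ℂ) * deriv ψ t‖ ^ 2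
      ≤ (∫ t in Set.Icc (-(L / 2)) (L / 2), ‖deriv ψ t‖ ^ 2)
        + Real.pi ^ 2 / (16 * ℓ ^ 2) * ∫ t : ℝ, ‖ψ t‖ ^ 2 * chicut L ℓ t := by
  classical
  have hπ := Real.pi_pos
  set k : ℝ := Real.pi / (4 * ℓ) with hkdef
  have hk0 : 0 < k := by positivity
  have hψc : Continuous ψ := hψ.continuous
  have hψd : Continuous (deriv ψ) := hψ.continuous_deriv le_rfl
  -- periodicity of the derivative
  have hfun : (fun s => ψ (s + L)) = ψ := funext hper
  have hperd : ∀ t : ℝ, deriv ψ (t + L) = deriv ψ t := by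
    intro t
    have := deriv_comp_add_const ψ L t
    rw [hfun] at this
    exact this.symm
  have hper' : ∀ t : ℝ, ψ (t - L) = ψ t := by
    intro t; rw [← hper (t - L)]; ring_nf
  have hperd' : ∀ t : ℝ, deriv ψ (t - L) = deriv ψ t := by
    intro t; rw [← hperd (t - L)]; ring_nf
  set F : ℝ → ℝ := fun t => ‖(qcut' L ℓ t : ℂ) * ψ t + (qcut L ℓ t : ℂ) * deriv ψ t‖ ^ 2
    with hFdef
  -- abbreviations for the partition points
  set a1 : ℝ := -(L / 2) - ℓ with ha1
  set a2 : ℝ := -(L / 2) + ℓ with ha2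
  set a3 : ℝ := L / 2 - ℓ with ha3
  set a4 : ℝ := L / 2 + ℓ with ha4
  have h12 : a1 ≤ a2 := by rw [ha1, ha2]; linarith
  have h23 : a2 ≤ a3 := by rw [ha2, ha3]; linarith
  have h34 : a3 ≤ a4 := by rw [ha3, ha4]; linarith
  -- measurability of F
  have hFmeas : Measurable F := by
    apply Measurable.pow_const
    apply Measurable.norm
    exact ((Complex.measurable_ofReal.comp (KineticAux.measurable_qcut' L ℓ)).mul
      hψc.measurable).add
      ((Complex.measurable_ofReal.comp (KineticAux.measurable_qcut L ℓ)).mul hψd.measurable)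
  -- F vanishes outside [a1, a4]
  have hFzero : ∀ t : ℝ, t ∉ Set.Icc a1 a4 → F t = 0 := by
    intro t ht
    rw [Set.mem_Icc, not_and_or] at ht
    have h : t < -(L / 2) - ℓ ∨ L / 2 + ℓ < t := by
      rcases ht with h | h
      · left; rw [ha1] at h; linarith [lt_of_not_ge h]
      · right; rw [ha4] at h; linarith [lt_of_not_ge h]
    obtain ⟨hq, hq'⟩ := KineticAux.outside_zero L ℓ t hL hℓ h
    simp [hFdef, hq, hq']
  -- pointwise bound for F
  have hFbound : ∀ t : ℝ, F t ≤ (k * ‖ψ t‖ + ‖deriv ψ t‖) ^ 2 := by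
    intro t
    have h1 : ‖(qcut' L ℓ t : ℂ) * ψ t + (qcut L ℓ t : ℂ) * deriv ψ t‖
        ≤ k * ‖ψ t‖ + ‖deriv ψ t‖ := by
      calc ‖(qcut' L ℓ t : ℂ) * ψ t + (qcut L ℓ t : ℂ) * deriv ψ t‖
          ≤ ‖(qcut' L ℓ t : ℂ) * ψ t‖ + ‖(qcut L ℓ t : ℂ) * deriv ψ t‖ := norm_add_le _ _
        _ = |qcut' L ℓ t| * ‖ψ t‖ + |qcut L ℓ t| * ‖deriv ψ t‖ := by
            simp [norm_mul, Complex.norm_real]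
        _ ≤ k * ‖ψ t‖ + 1 * ‖deriv ψ t‖ := by
            gcongr
            · exact KineticAux.abs_qcut'_le L ℓ t hℓ
            · exact KineticAux.abs_qcut_le_one L ℓ t
        _ = k * ‖ψ t‖ + ‖deriv ψ t‖ := by rw [one_mul]
    have h2 : (0:ℝ) ≤ k * ‖ψ t‖ + ‖deriv ψ t‖ := by positivity
    exact pow_le_pow_left₀ (norm_nonneg _) h1 2
  -- F is integrable
  have hg : Continuous fun t => (k * ‖ψ t‖ + ‖deriv ψ t‖) ^ 2 := by fun_prop
  have hFint : Integrable F := by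
    have hFind : F = (Set.Icc a1 a4).indicator F := by
      funext t
      by_cases ht : t ∈ Set.Icc a1 a4
      · rw [Set.indicator_of_mem ht]
      · rw [Set.indicator_of_notMem ht, hFzero t ht]
    rw [hFind, integrable_indicator_iff measurableSet_Icc]
    apply Integrable.mono' (hg.integrableOn_Icc)
      hFmeas.aestronglyMeasurable.restrict
    filter_upwards with t
    rw [Real.norm_of_nonneg (by positivity)]
    exact hFbound t
  -- chi integrand is integrable and nonneg
  have hχeq : (fun t => ‖ψ t‖ ^ 2 * chicut L ℓ t)
      = (Set.Icc a1 a2 ∪ Set.Icc a3 a4).indicator (fun t => ‖ψ t‖ ^ 2) := by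
    funext t
    have hmem : (|t + L / 2| ≤ ℓ ∨ |t - L / 2| ≤ ℓ) ↔ t ∈ Set.Icc a1 a2 ∪ Set.Icc a3 a4 := by
      simp only [Set.mem_union, Set.mem_Icc, abs_le, ha1, ha2, ha3, ha4]
      constructor
      · rintro (⟨h1, h2⟩ | ⟨h1, h2⟩)
        · left; constructor <;> linarith
        · right; constructor <;> linarith
      · rintro (⟨h1, h2⟩ | ⟨h1, h2⟩)
        · left; constructor <;> linarith
        · right; constructor <;> linarith
    unfold chicut
    by_cases hc : |t + L / 2| ≤ ℓ ∨ |t - L / 2| ≤ ℓ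
    · rw [if_pos hc, Set.indicator_of_mem (hmem.1 hc), mul_one]
    · rw [if_neg hc, Set.indicator_of_notMem (fun hm => hc (hmem.2 hm)), mul_zero]
  have hχint : Integrable fun t => ‖ψ t‖ ^ 2 * chicut L ℓ t := by
    rw [hχeq, integrable_indicator_iff (measurableSet_Icc.union measurableSet_Icc)]
    exact ((by fun_prop : Continuous fun t => ‖ψ t‖ ^ 2).integrableOn_Icc).union
      ((by fun_prop : Continuous fun t => ‖ψ t‖ ^ 2).integrableOn_Icc)
  have hχnonneg : ∀ t : ℝ, 0 ≤ ‖ψ t‖ ^ 2 * chicut L ℓ t := by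
    intro t
    unfold chicut
    split_ifs <;> positivity
  -- Step 1: ∫ F = interval integral over a1..a4
  have step1 : ∫ t : ℝ, F t = ∫ t in a1..a4, F t := by
    rw [intervalIntegral.integral_of_le (h12.trans (h23.trans h34)),
      ← MeasureTheory.integral_Icc_eq_integral_Ioc,
      ← MeasureTheory.integral_indicator measurableSet_Icc]
    congr 1
    funext t
    by_cases ht : t ∈ Set.Icc a1 a4
    · rw [Set.indicator_of_mem ht]
    · rw [Set.indicator_of_notMem ht, hFzero t ht]
  -- Step 2: split into three pieces
  have hFi : ∀ a b : ℝ, IntervalIntegrable F volume a b := fun a b =>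
    hFint.intervalIntegrable
  have step2 : ∫ t in a1..a4, F t
      = (∫ t in a1..a2, F t) + (∫ t in a2..a3, F t) + (∫ t in a3..a4, F t) := by
    rw [intervalIntegral.integral_add_adjacent_intervals (hFi a1 a2) (hFi a2 a3),
      intervalIntegral.integral_add_adjacent_intervals (hFi a1 a3) (hFi a3 a4)]
  -- Step 3: middle piece
  have step3 : ∫ t in a2..a3, F t = ∫ t in a2..a3, ‖deriv ψ t‖ ^ 2 := by
    rw [intervalIntegral.integral_of_le h23, intervalIntegral.integral_of_le h23]
    apply MeasureTheory.setIntegral_congr_fun measurableSet_Ioc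
    intro t ht
    obtain ⟨hq, hq'⟩ := KineticAux.middle_one L ℓ t hL hℓ hℓL ht
    simp [hFdef, hq, hq']
  -- Step 4: left piece as shifted right layer
  have step4 : ∫ t in a1..a2, F t = ∫ t in a3..a4, F (t - L) := by
    rw [intervalIntegral.integral_comp_sub_right F L]
    have e1 : a3 - L = a1 := by rw [ha3, ha1]; ring
    have e2 : a4 - L = a2 := by rw [ha4, ha2]; ring
    rw [e1, e2]
  -- Step 5: pointwise identity on the right layer
  have step5 : ∀ t ∈ Set.Ioc a3 a4,
      F (t - L) + F t = ‖deriv ψ t‖ ^ 2 + k ^ 2 * ‖ψ t‖ ^ 2 := by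
    intro t ht
    have habs : |t - L / 2| ≤ ℓ := by
      rw [abs_le]; obtain ⟨h1, h2⟩ := ht
      constructor
      · rw [ha3] at h1; linarith
      · rw [ha4] at h2; linarith
    obtain ⟨hq, hq', hqs, hqs'⟩ := KineticAux.right_layer L ℓ t hL hℓ hℓL habs
    set θ := Real.pi * (t - L / 2 + ℓ) / (4 * ℓ) with hθ
    have hsc := Real.sin_sq_add_cos_sq θ
    rw [hFdef]
    simp only [hq, hq', hqs, hqs', hper' t, hperd' t]
    rw [KineticAux.norm_comb, KineticAux.norm_comb]
    linear_combination (k ^ 2 * ‖ψ t‖ ^ 2 + ‖deriv ψ t‖ ^ 2) * hsc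
  -- Step 6: combine the two layers
  have hcont1 : Continuous fun t => ‖deriv ψ t‖ ^ 2 := by fun_prop
  have hcont2 : Continuous fun t => ‖ψ t‖ ^ 2 := by fun_prop
  have hFshift : IntervalIntegrable (fun t => F (t - L)) volume a3 a4 := by
    apply Integrable.intervalIntegrable
    exact hFint.comp_sub_right L
  have step6 : (∫ t in a3..a4, F (t - L)) + (∫ t in a3..a4, F t)
      = (∫ t in a3..a4, ‖deriv ψ t‖ ^ 2) + k ^ 2 * ∫ t in a3..a4, ‖ψ t‖ ^ 2 := by
    rw [← intervalIntegral.integral_add hFshift (hFi a3 a4)]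
    rw [← intervalIntegral.integral_const_mul, ← intervalIntegral.integral_add
      (hcont1.intervalIntegrable a3 a4)
      (show IntervalIntegrable (fun t => k ^ 2 * ‖ψ t‖ ^ 2) volume a3 a4 from
        (continuous_const.mul hcont2).intervalIntegrable a3 a4)]
    rw [intervalIntegral.integral_of_le h34, intervalIntegral.integral_of_le h34]
    apply MeasureTheory.setIntegral_congr_fun measurableSet_Ioc
    intro t ht
    exact step5 t ht
  -- Step 7: RHS derivative term
  have step7 : ∫ t in Set.Icc (-(L / 2)) (L / 2), ‖deriv ψ t‖ ^ 2
      = (∫ t in a2..a3, ‖deriv ψ t‖ ^ 2) + ∫ t in a3..a4, ‖deriv ψ t‖ ^ 2 := by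
    have hD : ∀ a b : ℝ, IntervalIntegrable (fun t => ‖deriv ψ t‖ ^ 2) volume a b :=
      fun a b => hcont1.intervalIntegrable a b
    have e0 : ∫ t in Set.Icc (-(L / 2)) (L / 2), ‖deriv ψ t‖ ^ 2
        = ∫ t in (-(L / 2))..(L / 2), ‖deriv ψ t‖ ^ 2 := by
      rw [intervalIntegral.integral_of_le (by linarith),
        MeasureTheory.integral_Icc_eq_integral_Ioc]
    have esplit : ∫ t in (-(L / 2))..(L / 2), ‖deriv ψ t‖ ^ 2
        = (∫ t in (-(L / 2))..a2, ‖deriv ψ t‖ ^ 2) + (∫ t in a2..a3, ‖deriv ψ t‖ ^ 2)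
          + ∫ t in a3..(L / 2), ‖deriv ψ t‖ ^ 2 := by
      rw [intervalIntegral.integral_add_adjacent_intervals (hD (-(L/2)) a2) (hD a2 a3),
        intervalIntegral.integral_add_adjacent_intervals (hD (-(L/2)) a3) (hD a3 (L/2))]
    have eshift : ∫ t in (-(L / 2))..a2, ‖deriv ψ t‖ ^ 2
        = ∫ t in (L / 2)..a4, ‖deriv ψ t‖ ^ 2 := by
      have h := intervalIntegral.integral_comp_sub_right
        (a := L / 2) (b := a4) (fun t => ‖deriv ψ t‖ ^ 2) L
      rw [show L / 2 - L = -(L / 2) by ring, show a4 - L = a2 by rw [ha4, ha2]; ring] at h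
      rw [← h]
      apply intervalIntegral.integral_congr
      intro x _
      simp only [hperd' x]
    have ejoin : (∫ t in a3..(L / 2), ‖deriv ψ t‖ ^ 2) + ∫ t in (L / 2)..a4, ‖deriv ψ t‖ ^ 2
        = ∫ t in a3..a4, ‖deriv ψ t‖ ^ 2 :=
      intervalIntegral.integral_add_adjacent_intervals (hD a3 (L/2)) (hD (L/2) a4)
    rw [e0, esplit, eshift]
    linarith [ejoin]
  -- Step 8: the chi integral dominates the layer integral
  have step8 : ∫ t in a3..a4, ‖ψ t‖ ^ 2 ≤ ∫ t : ℝ, ‖ψ t‖ ^ 2 * chicut L ℓ t := by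
    have e1 : ∫ t in a3..a4, ‖ψ t‖ ^ 2
        = ∫ t in Set.Ioc a3 a4, ‖ψ t‖ ^ 2 * chicut L ℓ t := by
      rw [intervalIntegral.integral_of_le h34]
      apply MeasureTheory.setIntegral_congr_fun measurableSet_Ioc
      intro t ht
      have habs : |t - L / 2| ≤ ℓ := by
        rw [abs_le]; obtain ⟨h1, h2⟩ := ht
        constructor
        · rw [ha3] at h1; linarith
        · rw [ha4] at h2; linarith
      show ‖ψ t‖ ^ 2 = ‖ψ t‖ ^ 2 * chicut L ℓ t
      have hone : chicut L ℓ t = 1 := by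
        unfold chicut
        rw [if_pos (Or.inr habs)]
      rw [hone, mul_one]
    rw [e1]
    exact MeasureTheory.setIntegral_le_integral hχint
      (Filter.Eventually.of_forall hχnonneg)
  -- conclude
  have hcoef : Real.pi ^ 2 / (16 * ℓ ^ 2) = k ^ 2 := by
    rw [hkdef, div_pow]
    congr 1
    ring
  have hLHS : ∫ t : ℝ, F t
      = (∫ t in Set.Icc (-(L / 2)) (L / 2), ‖deriv ψ t‖ ^ 2)
        + k ^ 2 * ∫ t in a3..a4, ‖ψ t‖ ^ 2 := by
    rw [step1, step2, step3, step4, step7]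
    linarith [step6]
  calc ∫ t : ℝ, F t
      = (∫ t in Set.Icc (-(L / 2)) (L / 2), ‖deriv ψ t‖ ^ 2)
        + k ^ 2 * ∫ t in a3..a4, ‖ψ t‖ ^ 2 := hLHS
    _ ≤ (∫ t in Set.Icc (-(L / 2)) (L / 2), ‖deriv ψ t‖ ^ 2)
        + k ^ 2 * ∫ t : ℝ, ‖ψ t‖ ^ 2 * chicut L ℓ t := by
        have := hk0
        gcongr
    _ = (∫ t in Set.Icc (-(L / 2)) (L / 2), ‖deriv ψ t‖ ^ 2)
        + Real.pi ^ 2 / (16 * ℓ ^ 2) * ∫ t : ℝ, ‖ψ t‖ ^ 2 * chicut L ℓ t := by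
        rw [hcoef]
end

section
/- For all b > 0 and x > 0, one has (x + b − √(x² + 2bx)) / (2·√(x² + 2bx)) ≤ √b / (2·√(2x)) and (x + b − √(x² + 2bx)) / (2·√(x² + 2bx)) ≤ b² / (4·x²). -/
/-- **Pointwise bounds on the Bogoliubov coefficient `σ² = sinh² τ`** (Lemma 2.2).
For `b, x > 0`:
`(x + b − √(x² + 2bx)) / (2√(x² + 2bx)) ≤ √b/(2√(2x))` and `≤ b²/(4x²)`. -/
theorem sigma_squared_bounds (b x : ℝ) (hb : 0 < b) (hx : 0 < x) :
    (x + b - Real.sqrt (x ^ 2 + 2 * b * x)) / (2 * Real.sqrt (x ^ 2 + 2 * b * x))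
        ≤ Real.sqrt b / (2 * Real.sqrt (2 * x)) ∧
    (x + b - Real.sqrt (x ^ 2 + 2 * b * x)) / (2 * Real.sqrt (x ^ 2 + 2 * b * x))
        ≤ b ^ 2 / (4 * x ^ 2) := by
  set s := Real.sqrt (x ^ 2 + 2 * b * x) with hs_def
  have harg : (0:ℝ) < x ^ 2 + 2 * b * x := by positivity
  have hs_pos : 0 < s := Real.sqrt_pos.mpr harg
  have hs2 : s ^ 2 = x ^ 2 + 2 * b * x := Real.sq_sqrt harg.le
  have hxs : x ≤ s := by
    nlinarith [hs2, hs_pos, sq_nonneg (s - x)]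
  have hsxb : s ≤ x + b := by
    nlinarith [hs2, hs_pos, sq_nonneg (s - (x + b))]
  have ht_pos : 0 < Real.sqrt (2 * x) := Real.sqrt_pos.mpr (by positivity)
  have hu_pos : 0 < Real.sqrt b := Real.sqrt_pos.mpr hb
  have ht2 : Real.sqrt (2 * x) ^ 2 = 2 * x := Real.sq_sqrt (by positivity)
  have hu2 : Real.sqrt b ^ 2 = b := Real.sq_sqrt hb.le
  have hts : Real.sqrt (2 * x) * Real.sqrt b ≤ s := by
    rw [hs_def, ← Real.sqrt_mul (by positivity)]
    apply Real.sqrt_le_sqrt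
    nlinarith
  constructor
  · rw [div_le_div_iff₀ (by positivity) (by positivity)]
    nlinarith [mul_nonneg (sub_nonneg.mpr hxs) ht_pos.le,
      mul_nonneg hu_pos.le (sub_nonneg.mpr hts)]
  · rw [div_le_div_iff₀ (by positivity) (by positivity)]
    have hd0 : 0 ≤ x + b - s := sub_nonneg.mpr hsxb
    have hq0 : 0 ≤ 2 * s * (x + b + s) - 4 * x ^ 2 := by nlinarith
    nlinarith [mul_nonneg hd0 hq0]
end

section
/- Let b > 0, x > 0, and let τ ∈ ℝ satisfy tanh(2τ) = −b/(x + b). Then x·sinh²(τ) + b·(sinh²(τ) + sinh(τ)·cosh(τ)) = (√(x² + 2bx) − x − b)/2. -/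
/-- **Scalar Bogoliubov diagonalization identity** (Section 3).
If `tanh (2τ) = −b/(x+b)` with `b, x > 0`, then
`x·sinh² τ + b·(sinh² τ + sinh τ · cosh τ) = (√(x² + 2bx) − x − b)/2`. -/
theorem bogoliubov_diagonalization (b x τ : ℝ) (hb : 0 < b) (hx : 0 < x)
    (hτ : Real.tanh (2 * τ) = -b / (x + b)) :
    x * Real.sinh τ ^ 2 + b * (Real.sinh τ ^ 2 + Real.sinh τ * Real.cosh τ)
      = (Real.sqrt (x ^ 2 + 2 * b * x) - x - b) / 2 := by
  set c := Real.cosh (2 * τ) with hcdef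
  set s := Real.sinh (2 * τ) with hsdef
  have hxb : 0 < x + b := by linarith
  have hc : 0 < c := Real.cosh_pos _
  have hcne : Real.cosh (2 * τ) ≠ 0 := ne_of_gt (Real.cosh_pos _)
  have hs : s * (x + b) = -b * c := by
    have := Real.tanh_eq_sinh_div_cosh (2 * τ)
    rw [hτ] at this
    field_simp at this
    linarith [this]
  have hid : c ^ 2 - s ^ 2 = 1 := Real.cosh_sq_sub_sinh_sq (2 * τ)
  have hs2 : s ^ 2 * (x + b) ^ 2 = b ^ 2 * c ^ 2 := by
    linear_combination (s * (x + b) - b * c) * hs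
  have hkey : c ^ 2 * (x ^ 2 + 2 * b * x) = (x + b) ^ 2 := by
    linear_combination (x + b) ^ 2 * hid + hs2
  have hpos : 0 < (x + b) * c + b * s := by
    have hsval : s = -b * c / (x + b) := by field_simp; linarith [hs]
    rw [hsval]
    rw [div_eq_mul_inv]
    have : (x + b) * c + b * (-b * c * (x + b)⁻¹)
        = c * (x ^ 2 + 2 * b * x) / (x + b) := by field_simp; ring
    rw [this]
    positivity
  have hsqrt : Real.sqrt (x ^ 2 + 2 * b * x) = (x + b) * c + b * s := by
    have h2 : x ^ 2 + 2 * b * x = ((x + b) * c + b * s) ^ 2 := by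
      nlinarith [hkey, hs, hid]
    rw [h2, Real.sqrt_sq hpos.le]
  have h3 : Real.sinh τ ^ 2 = (c - 1) / 2 := by
    have := Real.cosh_two_mul τ
    have h4 := Real.cosh_sq_sub_sinh_sq τ
    rw [← hcdef] at this
    nlinarith
  have h5 : Real.sinh τ * Real.cosh τ = s / 2 := by
    have := Real.sinh_two_mul τ
    rw [← hsdef] at this
    linarith
  rw [h3, h5, hsqrt]
  ring
end

section
/- Let γ > 1, α ∈ (0, 1), R ≥ 0, and c' > 0. Then there exist ρ₀ ∈ (0, 1) and C > 0 such that for every ρ ∈ (0, ρ₀) there exists x > 0 satisfying x = (1 + 2·(ρ(1 + c'ρ))^{γ(1−α)}·x^{α−1} + R·(ρ(1 + c'ρ))^{γ}·x^{−1})^{−3γ} and |x − 1| ≤ C·ρ^{γ(1−α)}. -/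
set_option maxHeartbeats 1000000

/-- Bernoulli-type inequality for negative exponents: for `s ≥ 0` and `q ≥ 1`,
`1 - q*s ≤ (1+s)^(-q)`. -/
lemma bernoulli_neg_exp {q s : ℝ} (hq : 1 ≤ q) (hs : 0 ≤ s) :
    1 - q * s ≤ (1 + s) ^ (-q) := by
  have hu : (0:ℝ) < 1 + s := by linarith
  set v : ℝ := (1 + s)⁻¹ - 1 with hv
  have hv1 : (-1:ℝ) ≤ v := by
    have : (0:ℝ) ≤ (1 + s)⁻¹ := by positivity
    simp only [hv]; linarith
  have hb := one_add_mul_self_le_rpow_one_add hv1 hq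
  have h1v : 1 + v = (1 + s)⁻¹ := by simp [hv]
  rw [h1v] at hb
  have hinv : ((1 + s)⁻¹ : ℝ) ^ q = (1 + s) ^ (-q) := by
    rw [← Real.rpow_neg_one (1 + s), ← Real.rpow_mul hu.le]
    norm_num
  rw [hinv] at hb
  refine le_trans ?_ hb
  -- `1 - q*s ≤ 1 + q*v` i.e. `q*(s/(1+s)) ≤ q*s`
  have hvval : v = -(s / (1 + s)) := by
    field_simp [hv]
    rw [hv, sub_mul, inv_mul_cancel₀ hu.ne']; ring
  rw [hvval]
  have h1 : s / (1 + s) ≤ s := by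
    rw [div_le_iff₀ hu]; nlinarith
  nlinarith [h1, hq, hs]

/-- **Fixed-point step (eq:impl1) in the proof of Theorem 1.1**:
for `γ > 1`, `α ∈ (0,1)`, `R ≥ 0`, `c' > 0` there are `ρ₀ ∈ (0,1)` and `C > 0`
such that for every `ρ ∈ (0, ρ₀)` there is `x > 0` with
`x = (1 + 2(ρ(1+c'ρ))^{γ(1−α)} x^{α−1} + R(ρ(1+c'ρ))^γ x^{−1})^{−3γ}` and
`|x − 1| ≤ C ρ^{γ(1−α)}`. -/
theorem implicit_function_step (γ α R c' : ℝ)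
    (hγ : 1 < γ) (hα0 : 0 < α) (hα1 : α < 1) (hR : 0 ≤ R) (hc' : 0 < c') :
    ∃ ρ₀ : ℝ, 0 < ρ₀ ∧ ρ₀ < 1 ∧ ∃ C > 0, ∀ ρ : ℝ, 0 < ρ → ρ < ρ₀ →
      ∃ x : ℝ, 0 < x ∧
        x = (1 + 2 * (ρ * (1 + c' * ρ)) ^ (γ * (1 - α)) * x ^ (α - 1)
              + R * (ρ * (1 + c' * ρ)) ^ γ * x⁻¹) ^ (-(3 * γ)) ∧
        |x - 1| ≤ C * ρ ^ (γ * (1 - α)) := by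
  set β : ℝ := γ * (1 - α) with hβdef
  have hβ : 0 < β := by
    have : 0 < 1 - α := by linarith
    positivity
  have h1c : (0:ℝ) < 1 + c' := by linarith
  set K : ℝ := 4 * (1 + c') ^ β + 2 * R * (1 + c') ^ γ with hKdef
  have hK : 0 < K := by
    have h1 : (0:ℝ) < (1 + c') ^ β := Real.rpow_pos_of_pos h1c β
    have h2 : (0:ℝ) ≤ (1 + c') ^ γ := (Real.rpow_pos_of_pos h1c γ).le
    nlinarith
  set C : ℝ := 3 * γ * K with hCdef
  have hC : 0 < C := by positivity
  have h2C : (0:ℝ) < 2 * C := by positivity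
  refine ⟨min (1/2) ((2*C) ^ (-(1/β))), ?_, ?_, C, hC, ?_⟩
  · exact lt_min (by norm_num) (Real.rpow_pos_of_pos h2C _)
  · exact lt_of_le_of_lt (min_le_left _ _) (by norm_num)
  intro ρ hρ hρ0
  have hρhalf : ρ < 1/2 := lt_of_lt_of_le hρ0 (min_le_left _ _)
  have hρ1 : ρ ≤ 1 := by linarith
  -- the key smallness: C * ρ^β < 1/2
  have hρβsmall : C * ρ ^ β < 1/2 := by
    have h1 : ρ < (2*C) ^ (-(1/β)) := lt_of_lt_of_le hρ0 (min_le_right _ _)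
    have h2 : ρ ^ β < ((2*C) ^ (-(1/β))) ^ β := Real.rpow_lt_rpow hρ.le h1 hβ
    have h3 : ((2*C) ^ (-(1/β))) ^ β = (2*C)⁻¹ := by
      rw [← Real.rpow_mul h2C.le]
      have : -(1/β) * β = -1 := by field_simp
      rw [this, Real.rpow_neg_one]
    rw [h3] at h2
    calc C * ρ ^ β < C * (2*C)⁻¹ := by
          exact mul_lt_mul_of_pos_left h2 hC
      _ = 1/2 := by field_simp
  set s : ℝ := ρ * (1 + c' * ρ) with hsdef
  have hs : 0 < s := by positivity
  set ε : ℝ := s ^ β with hεdef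
  set δ : ℝ := s ^ γ with hδdef
  have hεnn : 0 ≤ ε := (Real.rpow_pos_of_pos hs β).le
  have hδnn : 0 ≤ δ := (Real.rpow_pos_of_pos hs γ).le
  have hsle : s ≤ (1 + c') * ρ := by
    have : 1 + c' * ρ ≤ 1 + c' := by nlinarith
    nlinarith
  have hεb : ε ≤ (1 + c') ^ β * ρ ^ β := by
    calc ε ≤ ((1 + c') * ρ) ^ β := Real.rpow_le_rpow hs.le hsle hβ.le
      _ = (1 + c') ^ β * ρ ^ β := Real.mul_rpow h1c.le hρ.le
  have hδb : δ ≤ (1 + c') ^ γ * ρ ^ β := by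
    have h1 : δ ≤ ((1 + c') * ρ) ^ γ := Real.rpow_le_rpow hs.le hsle (by linarith)
    have h2 : ((1 + c') * ρ) ^ γ = (1 + c') ^ γ * ρ ^ γ := Real.mul_rpow h1c.le hρ.le
    have h3 : ρ ^ γ ≤ ρ ^ β := by
      apply Real.rpow_le_rpow_of_exponent_ge hρ hρ1
      nlinarith
    calc δ ≤ (1 + c') ^ γ * ρ ^ γ := by rw [← h2]; exact h1
      _ ≤ (1 + c') ^ γ * ρ ^ β :=
        mul_le_mul_of_nonneg_left h3 (Real.rpow_pos_of_pos h1c γ).le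
  -- bound for the "perturbation" t x on [1/2, 1]
  have htbound : ∀ x ∈ Set.Icc (1/2 : ℝ) 1,
      2 * ε * x ^ (α - 1) + R * δ * x⁻¹ ≤ K * ρ ^ β := by
    intro x hx
    obtain ⟨hx1, hx2⟩ := hx
    have hxpos : (0:ℝ) < x := by linarith
    have hxp : x ^ (α - 1) ≤ 2 := by
      have h1 : x ^ (α - 1) ≤ (1/2 : ℝ) ^ (α - 1) :=
        Real.rpow_le_rpow_of_nonpos (by norm_num) hx1 (by linarith)
      have h2 : ((1/2 : ℝ)) ^ (α - 1) = (2:ℝ) ^ (1 - α) := by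
        rw [show (1/2 : ℝ) = 2⁻¹ by norm_num, ← Real.rpow_neg_one (2:ℝ),
          ← Real.rpow_mul (by norm_num : (0:ℝ) ≤ 2)]
        congr 1
        ring
      have h3 : (2:ℝ) ^ (1 - α) ≤ (2:ℝ) ^ (1:ℝ) :=
        Real.rpow_le_rpow_of_exponent_le (by norm_num) (by linarith)
      rw [Real.rpow_one] at h3
      linarith [h1, h2 ▸ h1]
    have hxi : x⁻¹ ≤ 2 := by
      rw [inv_le_comm₀ hxpos (by norm_num)]
      linarith
    have hxpnn : 0 ≤ x ^ (α - 1) := (Real.rpow_pos_of_pos hxpos _).le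
    have hxinn : 0 ≤ x⁻¹ := by positivity
    have h1 : 2 * ε * x ^ (α - 1) ≤ 4 * ε := by
      have := mul_le_mul_of_nonneg_left hxp (by positivity : (0:ℝ) ≤ 2 * ε)
      linarith
    have h2 : R * δ * x⁻¹ ≤ 2 * R * δ := by
      have := mul_le_mul_of_nonneg_left hxi (by positivity : (0:ℝ) ≤ R * δ)
      linarith
    have h3 : 4 * ε + 2 * R * δ ≤ K * ρ ^ β := by
      have := mul_le_mul_of_nonneg_left hδb (by linarith : (0:ℝ) ≤ 2 * R)
      have := mul_le_mul_of_nonneg_left hεb (by norm_num : (0:ℝ) ≤ 4)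
      rw [hKdef]; nlinarith
    exact le_trans (add_le_add h1 h2) h3
  -- the map F
  set F : ℝ → ℝ := fun x => (1 + 2 * ε * x ^ (α - 1) + R * δ * x⁻¹) ^ (-(3*γ))
    with hFdef
  have hbase1 : ∀ x ∈ Set.Icc (1/2 : ℝ) 1,
      1 ≤ 1 + 2 * ε * x ^ (α - 1) + R * δ * x⁻¹ := by
    intro x hx
    have hxpos : (0:ℝ) < x := by linarith [hx.1]
    have h1 : 0 ≤ x ^ (α - 1) := (Real.rpow_pos_of_pos hxpos _).le
    have h2 : 0 ≤ x⁻¹ := by positivity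
    have h3 : 0 ≤ 2 * ε * x ^ (α - 1) := by positivity
    have h4 : 0 ≤ R * δ * x⁻¹ := by positivity
    linarith
  -- lower bound on F on [1/2, 1]
  have hFlow : ∀ x ∈ Set.Icc (1/2 : ℝ) 1, 1 - C * ρ ^ β ≤ F x := by
    intro x hx
    set t : ℝ := 2 * ε * x ^ (α - 1) + R * δ * x⁻¹ with htdef
    have ht0 : 0 ≤ t := by have := hbase1 x hx; simp only [htdef]; linarith
    have htK : t ≤ K * ρ ^ β := htbound x hx
    have hb : 1 - 3*γ * t ≤ (1 + t) ^ (-(3*γ)) :=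
      bernoulli_neg_exp (by linarith) ht0
    have hFx : F x = (1 + t) ^ (-(3*γ)) := by
      simp only [hFdef, htdef]; ring_nf
    rw [hFx]
    refine le_trans ?_ hb
    have : 3*γ * t ≤ 3*γ * (K * ρ ^ β) := by
      apply mul_le_mul_of_nonneg_left htK; linarith
    simp only [hCdef]; nlinarith
  -- F ≤ 1 on [1/2, 1]
  have hFhigh : ∀ x ∈ Set.Icc (1/2 : ℝ) 1, F x ≤ 1 := fun x hx =>
    Real.rpow_le_one_of_one_le_of_nonpos (hbase1 x hx) (by linarith)
  -- continuity of g = F - id on [1/2,1]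
  have hcont : ContinuousOn (fun x => F x - x) (Set.Icc (1/2 : ℝ) 1) := by
    apply ContinuousOn.sub ?_ continuousOn_id
    apply ContinuousOn.rpow_const
    · apply ContinuousOn.add
      apply ContinuousOn.add continuousOn_const
      · exact (continuousOn_const).mul <| fun x hx =>
          (Real.continuousAt_rpow_const x (α-1)
            (Or.inl (by have := hx.1; intro h; rw [h] at this; norm_num at this))).continuousWithinAt
      · exact (continuousOn_const).mul <| ContinuousOn.inv₀ continuousOn_id
          (fun x hx => by have := hx.1; intro h; rw [h] at this; norm_num at this)
    · intro x hx
      left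
      have := hbase1 x hx
      linarith
  -- IVT
  have hmem : (0:ℝ) ∈ Set.Icc ((fun x => F x - x) 1) ((fun x => F x - x) (1/2)) := by
    constructor
    · have := hFhigh 1 (by constructor <;> norm_num)
      simp only; linarith
    · have := hFlow (1/2) (by constructor <;> norm_num)
      simp only; linarith
  have hsub := intermediate_value_Icc' (by norm_num : (1/2:ℝ) ≤ 1) hcont hmem
  obtain ⟨x, hxmem, hxfix⟩ := hsub
  have hxfix' : F x = x := by
    simp only at hxfix; linarith
  have hx1 : x ≤ 1 := hxmem.2
  have hxpos : 0 < x := by linarith [hxmem.1]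
  refine ⟨x, hxpos, ?_, ?_⟩
  · exact hxfix'.symm
  · have hlow := hFlow x hxmem
    rw [hxfix'] at hlow
    rw [abs_sub_comm, abs_of_nonneg (by linarith)]
    linarith
end
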